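/- arXiv:1201.5653 — 9 statements merged into one kernel-verified Lean document; each statement's English description precedes it below -/
import Mathlib

section
/- Let ∃X[F] be an ∃CNF formula and let p be a Z-boundary point of F with Z ⊆ X. Then p is removable in ∃X[F] if and only if one cannot turn p into an assignment satisfying F by changing only the values of variables of X. -/
open scoped Classical

namespace QE

variable {α : Type*}

/-- A literal: a variable together with a polarity. -/
abbrev Lit (α : Type*) := α × Bool

/-- A clause: a finite disjunction of literals. -/
abbrev Clause (α : Type*) := Finset (Lit α)

/-- A CNF formula: a finite conjunction of clauses. -/
abbrev CNF (α : Type*) := Finset (Clause α)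

/-- A (partial) assignment of Boolean values to variables. -/
abbrev Assign (α : Type*) := α → Option Bool

/-- The variables of a clause. -/
def clauseVars (C : Clause α) : Set α := {v | ∃ b, (v, b) ∈ C}

/-- The variables of a CNF formula. -/
def cnfVars (F : CNF α) : Set α := ⋃ C ∈ F, clauseVars C

/-- The variables assigned by a partial assignment. -/
def avars (q : Assign α) : Set α := {v | q v ≠ none}

/-- The (partial) assignment `r` extends the (partial) assignment `q`, i.e. `q ⊆ r`. -/
def AExtends (q r : Assign α) : Prop := ∀ v b, q v = some b → r v = some b

/-- The complete assignment (point) `p` extends the partial assignment `q`, i.e. `q ⊆ p`. -/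
def PExtends (q : Assign α) (p : α → Bool) : Prop := ∀ v b, q v = some b → p v = b

/-- A complete assignment satisfies a clause. -/
def pointSatClause (p : α → Bool) (C : Clause α) : Prop := ∃ l ∈ C, p l.1 = l.2

/-- A complete assignment satisfies a CNF formula. -/
def pointSatCNF (p : α → Bool) (F : CNF α) : Prop := ∀ C ∈ F, pointSatClause p C

/-- A partial assignment satisfies a clause. -/
def asatClause (q : Assign α) (C : Clause α) : Prop := ∃ l ∈ C, q l.1 = some l.2

/-- A partial assignment falsifies a literal. -/
def afalsLit (q : Assign α) (l : Lit α) : Prop := q l.1 = some (!l.2)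

/-- The cofactor of a clause: remove the literals falsified by `q`. -/
noncomputable def cofClause (q : Assign α) (C : Clause α) : Clause α :=
  C.filter (fun l => ¬ afalsLit q l)

/-- The cofactor `F|q`: remove clauses satisfied by `q` and delete from the
remaining clauses all literals falsified by `q`. -/
noncomputable def cofactor (q : Assign α) (F : CNF α) : CNF α :=
  (F.filter (fun C => ¬ asatClause q C)).image (cofClause q)

/-- The CNF formula `F` implies the clause `C`. -/
def Implies (F : CNF α) (C : Clause α) : Prop :=
  ∀ p : α → Bool, pointSatCNF p F → pointSatClause p C

/-- `C` is a `Z`-clause: `V(C) ∩ Z ≠ ∅`. -/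
def IsZClause (Z : Set α) (C : Clause α) : Prop := (clauseVars C ∩ Z).Nonempty

/-- `F^Z`: the set of `Z`-clauses of `F`. -/
noncomputable def zClauses (F : CNF α) (Z : Set α) : CNF α :=
  F.filter (fun C => IsZClause Z C)

/-- `p` is a `Z`-boundary point of `F`: `Z ≠ ∅`, `p` falsifies `F`, every clause of `F`
falsified by `p` is a `Z`-clause, and the latter condition fails for every proper subset of `Z`. -/
def BoundaryPt (F : CNF α) (Z : Set α) (p : α → Bool) : Prop :=
  Z.Nonempty ∧ ¬ pointSatCNF p F ∧
  (∀ C ∈ F, ¬ pointSatClause p C → IsZClause Z C) ∧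
  (∀ Z' ⊂ Z, ¬ (∀ C ∈ F, ¬ pointSatClause p C → IsZClause Z' C))

/-- A point `p` is `W`-removable in `F`: there is a clause `C` such that `F` implies `C`,
`p` falsifies `C`, and `V(C) ∩ W = ∅`. -/
def Removable (F : CNF α) (W : Set α) (p : α → Bool) : Prop :=
  ∃ C : Clause α, Implies F C ∧ ¬ pointSatClause p C ∧ clauseVars C ∩ W = ∅

/-- The variables of `Z` are redundant in `∃X[F]` with scope `W`: for every nonempty
subset `Vs ⊆ Z` there is no `W`-removable `Vs`-boundary point of `F`. -/
def RedundantWithScope (F : CNF α) (Z W : Set α) : Prop :=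
  ∀ Vs : Set α, Vs ⊆ Z → Vs.Nonempty →
    ∀ p : α → Bool, BoundaryPt F Vs p → ¬ Removable F W p

/-- The D-sequent `(∃X[F], q, W) → Z`: the variables of `Z` are redundant
in `∃X[F|q]` with scope `W`. -/
def DSeq (F : CNF α) (X : Set α) (q : Assign α) (W Z : Set α) : Prop :=
  RedundantWithScope (cofactor q F) Z W

/-- `∃X[F] ≡ ∃X[H]`. -/
def ExEquiv (X : Set α) (F H : CNF α) : Prop :=
  ∀ p : α → Bool,
    (∃ p' : α → Bool, (∀ v ∉ X, p' v = p v) ∧ pointSatCNF p' F) ↔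
    (∃ p' : α → Bool, (∀ v ∉ X, p' v = p v) ∧ pointSatCNF p' H)

/-- The variables of `Z` are redundant in `∃X[F]`: `∃X[F] ≡ ∃X[F \ F^Z]`. -/
noncomputable def Redundant (F : CNF α) (X Z : Set α) : Prop :=
  ExEquiv X F (F \ zClauses F Z)

/-- Clauses `C` and `C'` contain opposite literals of the variable `w`. -/
def oppLitOn (C C' : Clause α) (w : α) : Prop := ∃ b, (w, b) ∈ C ∧ (w, !b) ∈ C'

/-- Clauses `C` and `C'` are resolvable on `v`: they contain opposite literals of
exactly one variable, namely `v`. -/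
def ResolvableOn (C C' : Clause α) (v : α) : Prop := ∀ w, oppLitOn C C' w ↔ w = v

/-- A variable `v` is blocked in `F`: no two clauses of `F` are resolvable on `v`. -/
def BlockedVar (F : CNF α) (v : α) : Prop :=
  ∀ C ∈ F, ∀ C' ∈ F, ¬ ResolvableOn C C' v

/-- Assignments `q` and `q'` assign opposite values to the variable `w`. -/
def aOppOn (q q' : Assign α) (w : α) : Prop := ∃ b, q w = some b ∧ q' w = some (!b)

/-- Assignments `q` and `q'` are resolvable on `v`: exactly one variable assigned by
both of them, namely `v`, is assigned opposite values. -/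
def AResolvableOn (q q' : Assign α) (v : α) : Prop := ∀ w, aOppOn q q' w ↔ w = v

/-- The resolvent of assignments `q` and `q'` on `v`: all single-variable assignments
of `q` and `q'` except those to `v`. -/
noncomputable def aResolvent (q q' : Assign α) (v : α) : Assign α :=
  fun w => if w = v then none else ((q w).orElse (fun _ => q' w))




/-- Proposition 1: A `Z`-boundary point `p` of `F` (with `Z ⊆ X`) is removable
in `∃X[F]` iff one cannot turn `p` into an assignment satisfying `F` by changing only the
values of variables of `X`. -/
theorem removable_iff_not_fixable {α : Type*} (F : CNF α) (X Z : Set α) (p : α → Bool)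
    (hX : X ⊆ cnfVars F) (hZX : Z ⊆ X) (hbp : BoundaryPt F Z p) :
    Removable F X p ↔
      ¬ ∃ p' : α → Bool, (∀ v ∉ X, p' v = p v) ∧ pointSatCNF p' F := by
  constructor
  · rintro ⟨C, himp, hfal, hdisj⟩ ⟨p', hagree, hsat⟩
    apply hfal
    obtain ⟨l, hlC, hl⟩ := himp p' hsat
    refine ⟨l, hlC, ?_⟩
    rw [← hl]
    refine (hagree l.1 ?_).symm
    intro hlX
    have : l.1 ∈ clauseVars C ∩ X := ⟨⟨l.2, by simpa using hlC⟩, hlX⟩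
    simp [hdisj] at this
  · intro hno
    refine ⟨((F.biUnion id).filter (fun l => l.1 ∉ X)).image
      (fun l => (l.1, !p l.1)), ?_, ?_, ?_⟩
    · intro q hq
      by_contra hqc
      apply hno
      refine ⟨fun v => if v ∈ X then q v else p v, fun v hv => by simp [hv], ?_⟩
      intro D hD
      obtain ⟨l, hlD, hl⟩ := hq D hD
      refine ⟨l, hlD, ?_⟩
      by_cases hx : l.1 ∈ X
      · simpa [hx] using hl
      · have hmem : (l.1, !p l.1) ∈ ((F.biUnion id).filter (fun l => l.1 ∉ X)).image
            (fun l => (l.1, !p l.1)) := by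
          exact Finset.mem_image_of_mem _ (Finset.mem_filter.mpr
            ⟨Finset.mem_biUnion.mpr ⟨D, hD, by simpa using hlD⟩, hx⟩)
        have hne : q l.1 ≠ !p l.1 := by
          intro heq
          exact hqc ⟨(l.1, !p l.1), hmem, heq⟩
        have : q l.1 = p l.1 := by
          cases hpl : p l.1 <;> cases hql : q l.1 <;> simp_all
        simp [hx, ← this, hl]
    · rintro ⟨l, hlC, hl⟩
      obtain ⟨m, hm, rfl⟩ := Finset.mem_image.mp hlC
      simp at hl
    · ext v
      simp only [Set.mem_inter_iff, Set.mem_empty_iff_false, iff_false]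
      rintro ⟨⟨b, hb⟩, hvX⟩
      obtain ⟨m, hm, heq⟩ := Finset.mem_image.mp hb
      have := (Finset.mem_filter.mp hm).2
      have : m.1 = v := congrArg Prod.fst heq
      simp_all

end QE
end

section
/- Let ∃X[F] be an ∃CNF formula and Z ⊆ X. The variables of Z are not redundant in ∃X[F] if and only if there exists a W-boundary point of F, for some W ⊆ Z, that is X-removable in F. -/
open scoped Classical

namespace QE

variable {α : Type*}

/-! The proof rests on two observations. First, `∃X[F]` and `∃X[F \ F^Z]` can only differ at a
point `p` that satisfies `F \ F^Z` (so every clause of `F` it falsifies is a `Z`-clause) while no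
change of `p` on `X` satisfies `F`; shrinking `Z` to a minimal such set turns `p` into a
boundary point. Second, "no change of `p` on `X` satisfies `F`" is exactly `X`-removability of
`p`: one direction is immediate, and for the other `F` implies the clause over `V(F) \ X`
falsified by `p`. -/

lemma clauseVars_eq_image (C : Clause α) : clauseVars C = Prod.fst '' (C : Set (Lit α)) := by
  ext v
  simp [clauseVars]

lemma cnfVars_finite (F : CNF α) : (cnfVars F).Finite :=
  F.finite_toSet.biUnion fun C _ => by
    rw [clauseVars_eq_image]
    exact C.finite_toSet.image _

lemma pointSatCNF_of_eqOn {F : CNF α} {p q : α → Bool} (hq : pointSatCNF q F)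
    (hpq : Set.EqOn p q (cnfVars F)) : pointSatCNF p F := by
  intro C hC
  obtain ⟨l, hl, hsat⟩ := hq C hC
  have hl_vars : l.1 ∈ cnfVars F := Set.mem_biUnion hC ⟨l.2, hl⟩
  exact ⟨l, hl, (hpq hl_vars).trans hsat⟩

/-- The value of `∃X[F]` at the point `p`, i.e. whether `F|y` is satisfiable for the
restriction `y` of `p` to the variables outside `X`. -/
def ExSat (X : Set α) (F : CNF α) (p : α → Bool) : Prop :=
  ∃ p' : α → Bool, (∀ v ∉ X, p' v = p v) ∧ pointSatCNF p' F

section ExSat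

variable {X : Set α} {F G : CNF α} {p q : α → Bool}

lemma exSat_of_pointSatCNF (hp : pointSatCNF p F) : ExSat X F p :=
  ⟨p, fun _ _ => rfl, hp⟩

lemma ExSat.of_subset (hGF : G ⊆ F) : ExSat X F p → ExSat X G p
  | ⟨p', hp'p, hp'F⟩ => ⟨p', hp'p, fun C hC => hp'F C (hGF hC)⟩

lemma ExSat.congr (hpq : ∀ v ∉ X, p v = q v) : ExSat X F p → ExSat X F q
  | ⟨p', hp'p, hp'F⟩ => ⟨p', fun v hv => (hp'p v hv).trans (hpq v hv), hp'F⟩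

end ExSat

theorem not_redundant_iff {F : CNF α} {X Z : Set α} :
    ¬ Redundant F X Z ↔ ∃ p, pointSatCNF p (F \ zClauses F Z) ∧ ¬ ExSat X F p := by
  change ¬ (∀ p, ExSat X F p ↔ ExSat X (F \ zClauses F Z) p) ↔ _
  constructor
  · intro hne
    by_contra! hsat
    refine hne fun y => ⟨ExSat.of_subset Finset.sdiff_subset, ?_⟩
    rintro ⟨p, hpy, hp⟩
    exact (hsat p hp).congr hpy
  · rintro ⟨p, hp, hF⟩ heq
    exact hF ((heq p).2 (exSat_of_pointSatCNF hp))

noncomputable def blockingClause (p : α → Bool) (S : Finset α) : Clause α :=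
  S.image fun v => (v, !p v)

lemma clauseVars_blockingClause (p : α → Bool) (S : Finset α) :
    clauseVars (blockingClause p S) = S := by
  ext v
  simp [clauseVars, blockingClause]

lemma pointSatClause_blockingClause_iff {p q : α → Bool} {S : Finset α} :
    pointSatClause q (blockingClause p S) ↔ ∃ v ∈ S, q v ≠ p v := by
  simp [pointSatClause, blockingClause, Bool.eq_not_iff]

lemma Removable.not_pointSatCNF {F : CNF α} {X : Set α} {p : α → Bool} :
    Removable F X p → ¬ pointSatCNF p F
  | ⟨_, hFC, hpC, _⟩, hp => hpC (hFC p hp)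

theorem removable_iff_not_exSat {F : CNF α} {X : Set α} {p : α → Bool} :
    Removable F X p ↔ ¬ ExSat X F p := by
  constructor
  · rintro ⟨C, hFC, hpC, hCX⟩ ⟨p', hp'p, hp'F⟩
    obtain ⟨l, hl, hsat⟩ := hFC p' hp'F
    have hlX : l.1 ∉ X := fun h => (Set.eq_empty_iff_forall_notMem.1 hCX) l.1 ⟨⟨l.2, hl⟩, h⟩
    exact hpC ⟨l, hl, hp'p l.1 hlX ▸ hsat⟩
  · intro hp
    let S := ((cnfVars_finite F).sdiff (t := X)).toFinset
    refine ⟨blockingClause p S, ?_, by simp [pointSatClause_blockingClause_iff], ?_⟩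
    · intro q hq
      by_contra hqC
      simp only [pointSatClause_blockingClause_iff, not_exists, not_and, not_not] at hqC
      -- `q` agrees with `p` on `V(F) \ X`, so patching `q` with `p` outside `V(F)` contradicts `hp`
      refine hp ⟨fun v => if v ∈ cnfVars F then q v else p v, fun v hvX => ?_,
        pointSatCNF_of_eqOn hq fun v hv => if_pos hv⟩
      dsimp only
      split_ifs with hv
      · exact hqC v (by simp [S, hv, hvX])
      · rfl
    · rw [clauseVars_blockingClause]
      simp [S]

def FalsifiedAreZClauses (F : CNF α) (p : α → Bool) (W : Set α) : Prop :=
  ∀ C ∈ F, ¬ pointSatClause p C → IsZClause W C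

section FalsifiedAreZClauses

variable {F : CNF α} {p : α → Bool} {W Z : Set α}

lemma pointSatCNF_sdiff_zClauses_iff :
    pointSatCNF p (F \ zClauses F Z) ↔ FalsifiedAreZClauses F p Z := by
  simp only [pointSatCNF, FalsifiedAreZClauses, zClauses, Finset.mem_sdiff, Finset.mem_filter]
  grind

lemma FalsifiedAreZClauses.mono (h : FalsifiedAreZClauses F p W) (hWZ : W ⊆ Z) :
    FalsifiedAreZClauses F p Z :=
  fun C hC hpC => (h C hC hpC).mono (Set.inter_subset_inter_right _ hWZ)

lemma FalsifiedAreZClauses.inter_cnfVars (h : FalsifiedAreZClauses F p W) :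
    FalsifiedAreZClauses F p (W ∩ cnfVars F) := by
  intro C hC hpC
  obtain ⟨v, hvC, hvW⟩ := h C hC hpC
  exact ⟨v, hvC, hvW, Set.mem_biUnion hC hvC⟩

lemma FalsifiedAreZClauses.exists_minimal (h : FalsifiedAreZClauses F p Z) :
    ∃ W ⊆ Z, Minimal (FalsifiedAreZClauses F p) W := by
  let S := {W | W ⊆ Z ∩ cnfVars F ∧ FalsifiedAreZClauses F p W}
  have hS : S.Finite :=
    ((cnfVars_finite F).inter_of_right Z).finite_subsets.subset fun _ hW => hW.1
  obtain ⟨W, -, hW⟩ := hS.exists_le_minimal (a := Z ∩ cnfVars F) ⟨subset_rfl, h.inter_cnfVars⟩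
  refine ⟨W, hW.prop.1.trans Set.inter_subset_left, hW.prop.2, fun W' hW' hW'W => ?_⟩
  exact hW.2 ⟨hW'W.trans hW.prop.1, hW'⟩ hW'W

lemma boundaryPt_of_minimal (hp : ¬ pointSatCNF p F)
    (hW : Minimal (FalsifiedAreZClauses F p) W) : BoundaryPt F W p := by
  obtain ⟨C, hC, hpC⟩ := not_forall₂.1 hp
  exact ⟨(hW.prop C hC hpC).mono Set.inter_subset_right, hp, hW.prop,
    fun _ hW' => hW.not_prop_of_ssubset hW'⟩

end FalsifiedAreZClauses

theorem not_redundant_iff_removable_boundaryPt_general {α : Type*} (F : CNF α) (X Z : Set α) :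
    ¬ Redundant F X Z ↔
      ∃ W ⊆ Z, ∃ p : α → Bool, BoundaryPt F W p ∧ Removable F X p := by
  simp only [not_redundant_iff, pointSatCNF_sdiff_zClauses_iff, ← removable_iff_not_exSat]
  constructor
  · rintro ⟨p, hpZ, hrem⟩
    obtain ⟨W, hWZ, hW⟩ := hpZ.exists_minimal
    exact ⟨W, hWZ, p, boundaryPt_of_minimal hrem.not_pointSatCNF hW, hrem⟩
  · rintro ⟨W, hWZ, p, hbp, hrem⟩
    exact ⟨p, FalsifiedAreZClauses.mono hbp.2.2.1 hWZ, hrem⟩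

/-- Proposition 2: The variables of `Z ⊆ X` are not redundant in `∃X[F]` iff
there is an `X`-removable `W`-boundary point of `F` for some `W ⊆ Z`. -/
theorem not_redundant_iff_removable_boundaryPt {α : Type*} (F : CNF α) (X Z : Set α)
    (hX : X ⊆ cnfVars F) (hZX : Z ⊆ X) :
    ¬ Redundant F X Z ↔
      ∃ W ⊆ Z, ∃ p : α → Bool, BoundaryPt F W p ∧ Removable F X p :=
  not_redundant_iff_removable_boundaryPt_general F X Z

end QE
end

section
/- Let ∃X[F] be an ∃CNF formula, q an assignment to V(F), and p a Z-boundary point of F with q ⊆ p and Z ⊆ X. If p is removable in ∃X[F], then p is also removable in ∃X[F|q]. -/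
open scoped Classical

namespace QE

variable {α : Type*}

/-- Proposition 3: If a `Z`-boundary point `p` of `F` with `q ⊆ p`, `Z ⊆ X`,
is removable in `∃X[F]`, then it is also removable in `∃X[F|q]`. -/
theorem removable_cofactor {α : Type*} (F : CNF α) (X Z : Set α) (q : Assign α) (p : α → Bool)
    (hX : X ⊆ cnfVars F) (hq : avars q ⊆ cnfVars F) (hZX : Z ⊆ X)
    (hbp : BoundaryPt F Z p) (hqp : PExtends q p)
    (hrem : Removable F X p) :
    Removable (cofactor q F) X p := by
  obtain ⟨C, hImp, hpC, hCX⟩ := hrem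
  refine ⟨cofClause q C, ?_, ?_, ?_⟩
  · -- cofactor q F implies cofClause q C
    intro p' hp'
    -- p falsifies C, q ⊆ p ⇒ every literal of C assigned by q is falsified by q
    have hfals : ∀ l ∈ C, ∀ b, q l.1 = some b → b = !l.2 := by
      intro l hl b hb
      have hpl : p l.1 = b := hqp _ _ hb
      have : ¬ (p l.1 = l.2) := fun h => hpC ⟨l, hl, h⟩
      cases b <;> cases hl2 : l.2 <;> simp_all
    -- build p'' = q overriding p'
    set p'' : α → Bool := fun v => match q v with | some b => b | none => p' v with hp''def
    have hp''q : ∀ v b, q v = some b → p'' v = b := by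
      intro v b hb; simp [hp''def, hb]
    have hp''p' : ∀ v, q v = none → p'' v = p' v := by
      intro v hv; simp [hp''def, hv]
    have hp''F : pointSatCNF p'' F := by
      intro D hD
      by_cases hsat : asatClause q D
      · obtain ⟨l, hl, hql⟩ := hsat
        exact ⟨l, hl, hp''q _ _ hql⟩
      · have hDq : cofClause q D ∈ cofactor q F := by
          refine Finset.mem_image.2 ⟨D, Finset.mem_filter.2 ⟨hD, hsat⟩, rfl⟩
        obtain ⟨l, hl, hpl⟩ := hp' _ hDq
        have hlD : l ∈ D ∧ ¬ afalsLit q l := by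
          simpa [cofClause] using hl
        -- q does not assign l.1: if it did, either satisfies D or falsifies l
        have hqnone : q l.1 = none := by
          cases hql : q l.1 with
          | none => rfl
          | some b =>
            exfalso
            by_cases hb : b = l.2
            · exact hsat ⟨l, hlD.1, by rw [hql, hb]⟩
            · apply hlD.2
              unfold afalsLit
              rw [hql, Bool.eq_not_of_ne hb]
        exact ⟨l, hlD.1, by rw [hp''p' _ hqnone]; exact hpl⟩
    obtain ⟨l, hl, hpl⟩ := hImp p'' hp''F
    -- the satisfying literal is not assigned by q (else falsified by q via hfals)
    have hqnone : q l.1 = none := by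
      cases hql : q l.1 with
      | none => rfl
      | some b =>
        exfalso
        have hb : b = !l.2 := hfals l hl b hql
        have h2 : p'' l.1 = b := hp''q _ _ hql
        rw [hpl, hb] at h2
        exact absurd h2.symm (by simp)
    refine ⟨l, ?_, ?_⟩
    · exact Finset.mem_filter.2 ⟨hl, by simp [afalsLit, hqnone]⟩
    · rw [← hp''p' _ hqnone]; exact hpl
  · -- p falsifies cofClause q C
    intro ⟨l, hl, hpl⟩
    have : l ∈ C := Finset.mem_of_mem_filter _ hl
    exact hpC ⟨l, this, hpl⟩
  · -- vars of cofClause q C ⊆ vars of C, hence disjoint from X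
    apply Set.eq_empty_of_subset_empty
    rw [← hCX]
    apply Set.inter_subset_inter_left
    intro v ⟨b, hb⟩
    exact ⟨b, Finset.mem_of_mem_filter _ hb⟩

end QE
end

section
/- Let ∃X[F] be an ∃CNF formula and q an assignment to variables of F. Suppose the variables of Z are redundant in ∃X[F|q] with scope W, where Z ⊆ X \ Vars(q), and suppose a variable v of X \ (Vars(q) ∪ Z) is locally redundant in ∃X[F|q \ (F|q)^Z]. Then the variables of Z ∪ {v} are redundant in ∃X[F|q] with scope W ∪ {v}. -/
open scoped Classical

namespace QE

variable {α : Type*}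

def OnlyZFalsified (F : CNF α) (Z : Set α) (p : α → Bool) : Prop :=
  ∀ C ∈ F, ¬ pointSatClause p C → IsZClause Z C

lemma clauseVars_finite (C : Clause α) : (clauseVars C).Finite :=
  (C.finite_toSet.image Prod.fst).subset fun v ⟨b, hb⟩ => ⟨(v, b), hb, rfl⟩

lemma clauseVars_subset_cnfVars {F : CNF α} {C : Clause α} (hC : C ∈ F) :
    clauseVars C ⊆ cnfVars F :=
  Set.subset_biUnion_of_mem (u := clauseVars) hC

lemma mem_sdiff_zClauses {F : CNF α} {Z : Set α} {C : Clause α} :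
    C ∈ F \ zClauses F Z ↔ C ∈ F ∧ ¬ IsZClause Z C := by
  simp only [Finset.mem_sdiff, zClauses, Finset.mem_filter, not_and]
  exact and_congr_right fun hC => ⟨fun h hZ => h hC hZ, fun h _ => h⟩

lemma not_onlyZFalsified_empty {F : CNF α} {p : α → Bool} (hfals : ¬ pointSatCNF p F) :
    ¬ OnlyZFalsified F ∅ p := by
  intro h
  obtain ⟨C, hC, hpC⟩ : ∃ C ∈ F, ¬ pointSatClause p C := by
    simpa [pointSatCNF] using hfals
  simpa [IsZClause] using h C hC hpC

lemma OnlyZFalsified.inter_cnfVars {F : CNF α} {Z : Set α} {p : α → Bool}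
    (h : OnlyZFalsified F Z p) : OnlyZFalsified F (Z ∩ cnfVars F) p := by
  intro C hC hpC
  obtain ⟨x, hxC, hxZ⟩ := h C hC hpC
  exact ⟨x, hxC, hxZ, clauseVars_subset_cnfVars hC hxC⟩

lemma onlyZFalsified_of_pointSatCNF_sdiff {F : CNF α} {Z : Set α} {p : α → Bool}
    (h : pointSatCNF p (F \ zClauses F Z)) : OnlyZFalsified F Z p := by
  intro C hC hpC
  by_contra hZ
  exact hpC (h C (mem_sdiff_zClauses.mpr ⟨hC, hZ⟩))

/-- Take a minimal subset of the finite set `Z ∩ V(F)` that still meets every falsified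
clause. -/
lemma exists_boundaryPt_of_onlyZFalsified {F : CNF α} {Z : Set α} {p : α → Bool}
    (hfals : ¬ pointSatCNF p F) (h : OnlyZFalsified F Z p) :
    ∃ Vs ⊆ Z, BoundaryPt F Vs p := by
  set S : Set (Set α) := {V | V ⊆ Z ∩ cnfVars F ∧ OnlyZFalsified F V p}
  have hS : S.Finite :=
    ((cnfVars_finite F).inter_of_right Z).finite_subsets.subset fun _ hV => hV.1
  obtain ⟨V, ⟨hVsub, hV⟩, hVmin⟩ := hS.exists_minimal ⟨_, subset_rfl, h.inter_cnfVars⟩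
  refine ⟨V, hVsub.trans Set.inter_subset_left, ?_, hfals, hV, ?_⟩
  · exact Set.nonempty_iff_ne_empty.mpr fun hV0 => not_onlyZFalsified_empty hfals (hV0 ▸ hV)
  · intro Z' hZ' hZ'only
    exact hZ'.not_subset (hVmin ⟨hZ'.subset.trans hVsub, hZ'only⟩ hZ'.subset)

lemma Removable.anti {F : CNF α} {W W' : Set α} {p : α → Bool} (h : Removable F W' p)
    (hW : W ⊆ W') : Removable F W p := by
  obtain ⟨C, hImp, hpC, hCW'⟩ := h
  exact ⟨C, hImp, hpC, Set.subset_empty_iff.mp (hCW' ▸ Set.inter_subset_inter_right _ hW)⟩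

lemma RedundantWithScope.not_removable_of_onlyZFalsified {F : CNF α} {Z W : Set α}
    {p : α → Bool} (hred : RedundantWithScope F Z W) (hfals : ¬ pointSatCNF p F)
    (h : OnlyZFalsified F Z p) : ¬ Removable F W p := by
  obtain ⟨Vs, hVs, hbp⟩ := exists_boundaryPt_of_onlyZFalsified hfals h
  exact hred Vs hVs hbp.1 p hbp

/-- A point satisfying `F \ F^Z` but falsifying `C` would be `W`-removable and falsify only
`Z`-clauses of `F`. -/
lemma RedundantWithScope.implies_sdiff_zClauses {F : CNF α} {Z W : Set α} {C : Clause α}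
    (hred : RedundantWithScope F Z W) (hImp : Implies F C) (hCW : clauseVars C ∩ W = ∅) :
    Implies (F \ zClauses F Z) C := by
  intro p hp
  by_contra hpC
  exact hred.not_removable_of_onlyZFalsified (fun hF => hpC (hImp p hF))
    (onlyZFalsified_of_pointSatCNF_sdiff hp) ⟨C, hImp, hpC, hCW⟩

lemma BoundaryPt.singleton_sdiff_zClauses {F : CNF α} {Z Vs : Set α} {v : α}
    {p : α → Bool} (hbp : BoundaryPt F Vs p) (hVs : Vs ⊆ Z ∪ {v})
    (hZ : ¬ OnlyZFalsified F Z p) : BoundaryPt (F \ zClauses F Z) {v} p := by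
  obtain ⟨C₀, hC₀, hpC₀, hC₀Z⟩ : ∃ C₀ ∈ F, ¬ pointSatClause p C₀ ∧ ¬ IsZClause Z C₀ := by
    simpa [OnlyZFalsified] using hZ
  have hC₀mem : C₀ ∈ F \ zClauses F Z := mem_sdiff_zClauses.mpr ⟨hC₀, hC₀Z⟩
  have hfals : ¬ pointSatCNF p (F \ zClauses F Z) := fun h => hpC₀ (h C₀ hC₀mem)
  refine ⟨Set.singleton_nonempty v, hfals, ?_, ?_⟩
  · intro C hC hpC
    obtain ⟨hCF, hCZ⟩ := mem_sdiff_zClauses.mp hC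
    obtain ⟨x, hxC, hxVs⟩ := hbp.2.2.1 C hCF hpC
    rcases hVs hxVs with hxZ | hxv
    · exact absurd ⟨x, hxC, hxZ⟩ hCZ
    · exact ⟨x, hxC, hxv⟩
  · intro Z' hZ'
    rw [Set.ssubset_singleton_iff.mp hZ']
    exact not_onlyZFalsified_empty hfals

/-- A boundary point falsifying only `Z`-clauses is handled by the redundancy of `Z`; otherwise
it is a `{v}`-boundary point of `F|q \ (F|q)^Z`, and the clause removing it is still implied
there, contradicting the local redundancy of `v`. -/
theorem redundant_insert_locally_redundant_general {α : Type*} (F : CNF α) (Z W : Set α)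
    (q : Assign α) (v : α)
    (hred : RedundantWithScope (cofactor q F) Z W)
    (hloc : RedundantWithScope (cofactor q F \ zClauses (cofactor q F) Z) {v} {v}) :
    RedundantWithScope (cofactor q F) (Z ∪ {v}) (W ∪ {v}) := by
  intro Vs hVs _ p hbp hrem
  by_cases hZ : OnlyZFalsified (cofactor q F) Z p
  · exact hred.not_removable_of_onlyZFalsified hbp.2.1 hZ (hrem.anti Set.subset_union_left)
  · obtain ⟨C, hImp, hpC, hCWv⟩ := hrem
    obtain ⟨hCW, hCv⟩ := Set.disjoint_union_right.mp (Set.disjoint_iff_inter_eq_empty.mpr hCWv)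
    exact hloc {v} subset_rfl (Set.singleton_nonempty v) p
      (hbp.singleton_sdiff_zClauses hVs hZ)
      ⟨C, hred.implies_sdiff_zClauses hImp hCW.inter_eq, hpC, hCv.inter_eq⟩

/-- Proposition 4: If the variables of `Z ⊆ X \ Vars(q)` are redundant in
`∃X[F|q]` with scope `W`, and a variable `v ∈ X \ (Vars(q) ∪ Z)` is locally redundant in
`∃X[F|q \ (F|q)^Z]`, then the variables of `Z ∪ {v}` are redundant in `∃X[F|q]` with
scope `W ∪ {v}`. -/
theorem redundant_insert_locally_redundant {α : Type*} (F : CNF α) (X Z W : Set α)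
    (q : Assign α) (v : α)
    (hX : X ⊆ cnfVars F) (hq : avars q ⊆ cnfVars F)
    (hZq : Z ⊆ X \ avars q) (hZW : Z ⊆ W) (hWq : W ⊆ X \ avars q)
    (hred : RedundantWithScope (cofactor q F) Z W)
    (hv : v ∈ X \ (avars q ∪ Z))
    (hloc : RedundantWithScope (cofactor q F \ zClauses (cofactor q F) Z) {v} {v}) :
    RedundantWithScope (cofactor q F) (Z ∪ {v}) (W ∪ {v}) :=
  redundant_insert_locally_redundant_general F Z W q v hred hloc

end QE
end

section
/- Let ∃X[F] be an ∃CNF formula and q an assignment to V(F). If a variable v of X \ Vars(q) is blocked in F|q, then v is locally redundant in ∃X[F|q], i.e., the set {v} is redundant in ∃X[F|q] with scope {v}. -/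
open scoped Classical

namespace QE

variable {α : Type*}

/-
Flipping `v` in a `{v}`-boundary point `p` gives a point `p'`. A clause without `v` that
`p` falsifies is falsified by `p'` as well, so if `p` were `{v}`-removable, `p'` would falsify
`F`, and, by the boundary property, only through a clause `C₂` containing `v`. Together with a
clause `C₁ ∋ v` falsified by `p`, the clauses `C₁, C₂` are falsified by two points that differ
only in `v`, so they clash on `v` and nowhere else: they are resolvable on `v`.
-/

theorem not_pointSatClause_iff {p : α → Bool} {C : Clause α} :
    ¬ pointSatClause p C ↔ ∀ l ∈ C, p l.1 = !l.2 := by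
  simp only [pointSatClause, not_exists, not_and, Bool.eq_not_iff]

theorem pointSatClause_update_of_notMem {p : α → Bool} {C : Clause α} {v : α} (b : Bool)
    (hv : v ∉ clauseVars C) :
    pointSatClause (Function.update p v b) C ↔ pointSatClause p C := by
  refine exists_congr fun l => and_congr_right fun hl => ?_
  have hlv : l.1 ≠ v := by
    rintro rfl
    exact hv ⟨l.2, hl⟩
  rw [Function.update_of_ne hlv]

theorem isZClause_singleton {C : Clause α} {v : α} : IsZClause {v} C ↔ v ∈ clauseVars C := by
  simp [IsZClause, Set.inter_singleton_nonempty]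

theorem resolvableOn_of_not_pointSatClause_flip {p : α → Bool} {C₁ C₂ : Clause α} {v : α}
    (h₁ : ¬ pointSatClause p C₁) (h₂ : ¬ pointSatClause (Function.update p v (!p v)) C₂)
    (hv₁ : v ∈ clauseVars C₁) (hv₂ : v ∈ clauseVars C₂) :
    ResolvableOn C₁ C₂ v := by
  rw [not_pointSatClause_iff] at h₁ h₂
  intro w
  constructor
  · rintro ⟨b, hb₁, hb₂⟩
    by_contra hwv
    have := h₂ _ hb₂
    rw [Function.update_of_ne hwv, h₁ _ hb₁] at this
    simp at this
  · rintro rfl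
    obtain ⟨b₁, hb₁⟩ := hv₁
    obtain ⟨b₂, hb₂⟩ := hv₂
    have e₂ := h₂ _ hb₂
    rw [Function.update_self, h₁ _ hb₁] at e₂
    obtain rfl : b₂ = !b₁ := by simpa using e₂.symm
    exact ⟨b₁, hb₁, hb₂⟩

theorem BoundaryPt.exists_not_pointSatClause {F : CNF α} {v : α} {p : α → Bool}
    (hp : BoundaryPt F {v} p) : ∃ C ∈ F, ¬ pointSatClause p C ∧ v ∈ clauseVars C := by
  obtain ⟨-, hfals, hbd, -⟩ := hp
  obtain ⟨C, hC, hCf⟩ : ∃ C ∈ F, ¬ pointSatClause p C := by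
    simpa [pointSatCNF] using hfals
  exact ⟨C, hC, hCf, isZClause_singleton.mp (hbd C hC hCf)⟩

theorem BoundaryPt.mem_clauseVars_of_not_pointSatClause_update {F : CNF α} {v : α}
    {p : α → Bool} (hp : BoundaryPt F {v} p) (b : Bool) {C : Clause α} (hC : C ∈ F)
    (hCf : ¬ pointSatClause (Function.update p v b) C) : v ∈ clauseVars C := by
  by_contra hv
  rw [pointSatClause_update_of_notMem b hv] at hCf
  exact hv (isZClause_singleton.mp (hp.2.2.1 C hC hCf))

theorem Removable.not_pointSatCNF_update {F : CNF α} {v : α} {p : α → Bool}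
    (hp : Removable F {v} p) (b : Bool) : ¬ pointSatCNF (Function.update p v b) F := by
  obtain ⟨C, hCimp, hCf, hCv⟩ := hp
  have hv : v ∉ clauseVars C := fun hv => (Set.eq_empty_iff_forall_notMem.mp hCv) v ⟨hv, rfl⟩
  exact fun hF => hCf ((pointSatClause_update_of_notMem b hv).mp (hCimp _ hF))

theorem redundantWithScope_singleton_of_blockedVar {F : CNF α} {v : α}
    (hbl : BlockedVar F v) : RedundantWithScope F {v} {v} := by
  intro Vs hVs hne p hp hrem
  obtain rfl : Vs = {v} := (Set.Nonempty.subset_singleton_iff hne).mp hVs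
  obtain ⟨C₁, hC₁, hC₁f, hv₁⟩ := hp.exists_not_pointSatClause
  obtain ⟨C₂, hC₂, hC₂f⟩ : ∃ C ∈ F, ¬ pointSatClause (Function.update p v (!p v)) C := by
    simpa [pointSatCNF] using hrem.not_pointSatCNF_update (!p v)
  have hv₂ := hp.mem_clauseVars_of_not_pointSatClause_update _ hC₂ hC₂f
  exact hbl C₁ hC₁ C₂ hC₂ (resolvableOn_of_not_pointSatClause_flip hC₁f hC₂f hv₁ hv₂)

theorem blocked_locally_redundant_general {α : Type*} (F : CNF α) (q : Assign α) (v : α)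
    (hbl : BlockedVar (cofactor q F) v) :
    RedundantWithScope (cofactor q F) {v} {v} :=
  redundantWithScope_singleton_of_blockedVar hbl

/-- Proposition 5: If a variable `v ∈ X \ Vars(q)` is blocked in `F|q`,
then `v` is locally redundant in `∃X[F|q]`, i.e. `{v}` is redundant in `∃X[F|q]`
with scope `{v}`. -/
theorem blocked_locally_redundant {α : Type*} (F : CNF α) (X : Set α) (q : Assign α) (v : α)
    (hX : X ⊆ cnfVars F) (hq : avars q ⊆ cnfVars F)
    (hv : v ∈ X \ avars q) (hbl : BlockedVar (cofactor q F) v) :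
    RedundantWithScope (cofactor q F) {v} {v} :=
  blocked_locally_redundant_general F q v hbl

end QE
end

section
/- Let ∃X[F] be an ∃CNF formula, let H = F ∧ G where F implies G, and let q be an assignment to V(F). If the D-sequent (∃X[F], q, W) → Z holds, then the D-sequent (∃X[H], q, W) → Z holds as well. -/
open scoped Classical

namespace QE

variable {α : Type*}

lemma cof_union (q : Assign α) (F G : CNF α) :
    cofactor q (F ∪ G) = cofactor q F ∪ cofactor q G := by
  classical
  unfold cofactor
  rw [Finset.filter_union, Finset.image_union]

lemma cof_sat_mono (F G : CNF α) (q : Assign α) (hFG : ∀ C ∈ G, Implies F C)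
    (p : α → Bool) (hp : pointSatCNF p (cofactor q F)) :
    pointSatCNF p (cofactor q G) := by
  classical
  set p' : α → Bool := fun v => (q v).getD (p v) with hp'
  have hF : pointSatCNF p' F := by
    intro C hC
    by_cases hs : asatClause q C
    · obtain ⟨l, hl, hql⟩ := hs
      exact ⟨l, hl, by simp [hp', hql]⟩
    · have hmem : cofClause q C ∈ cofactor q F := by
        apply Finset.mem_image_of_mem
        simp [Finset.mem_filter, hC, hs]
      obtain ⟨l, hl, hpl⟩ := hp _ hmem
      have hl' := Finset.mem_filter.mp hl
      refine ⟨l, hl'.1, ?_⟩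
      cases hql : q l.1 with
      | none => simp [hp', hql, hpl]
      | some b =>
        exfalso
        have hbb : b ≠ !l.2 := by
          intro h; exact hl'.2 (by simp [afalsLit, hql, h])
        have hb : b = l.2 := by cases b <;> cases hb2 : l.2 <;> simp_all
        exact hs ⟨l, hl'.1, by rw [hql, hb]⟩
  intro D hD
  obtain ⟨C, hC, rfl⟩ := Finset.mem_image.mp hD
  have hC' := Finset.mem_filter.mp hC
  obtain ⟨l, hl, hpl⟩ := hFG C hC'.1 p' hF
  cases hql : q l.1 with
  | none =>
    refine ⟨l, Finset.mem_filter.mpr ⟨hl, by simp [afalsLit, hql]⟩, ?_⟩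
    simpa [hp', hql] using hpl
  | some b =>
    exfalso
    have hpb : p' l.1 = b := by simp [hp', hql]
    have hb : b = l.2 := by rw [← hpb, hpl]
    exact hC'.2 ⟨l, hl, by rw [hql, hb]⟩

lemma exists_min_card {β : Type*} {P : Finset β → Prop} (h : ∃ s, P s) :
    ∃ s, P s ∧ ∀ t, P t → s.card ≤ t.card := by
  classical
  obtain ⟨s0, hs0⟩ := h
  have hQ : ∃ n, ∃ s, P s ∧ s.card = n := ⟨s0.card, s0, hs0, rfl⟩
  obtain ⟨s, hPs, hcard⟩ := Nat.find_spec hQ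
  exact ⟨s, hPs, fun t ht => hcard ▸ Nat.find_min' hQ ⟨t, ht, rfl⟩⟩

/-- Proposition 7: Let `H = F ∧ G` where `F` implies `G`. If the D-sequent
`(∃X[F], q, W) → Z` holds, then the D-sequent `(∃X[H], q, W) → Z` holds as well. -/
theorem dseq_add_implied_clauses {α : Type*} (F G : CNF α) (X Z W : Set α) (q : Assign α)
    (hFG : ∀ C ∈ G, Implies F C)
    (hX : X ⊆ cnfVars F) (hq : avars q ⊆ cnfVars F)
    (hZW : Z ⊆ W) (hWq : W ⊆ X \ avars q)
    (hds : DSeq F X q W Z) :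
    DSeq (F ∪ G) X q W Z := by
  classical
  intro Vs hVZ hVne p hbp hrem
  rw [cof_union] at hbp hrem
  set FH := cofactor q F with hFH
  set GH := cofactor q G with hGH
  obtain ⟨hVne', hfals, hall, _⟩ := hbp
  have hkey : ∀ p₀ : α → Bool, pointSatCNF p₀ FH → pointSatCNF p₀ (FH ∪ GH) := by
    intro p₀ h₀ C hC
    rcases Finset.mem_union.mp hC with h | h
    · exact h₀ C h
    · exact cof_sat_mono F G q hFG p₀ h₀ C h
  -- p falsifies FH
  have hfalsF : ¬ pointSatCNF p FH := fun h => hfals (hkey p h)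
  -- set of falsified clauses of FH
  set B : CNF α := FH.filter (fun C => ¬ pointSatClause p C) with hB
  have hBne : B.Nonempty := by
    by_contra hB0
    apply hfalsF
    intro C hC
    by_contra hsC
    exact hB0 ⟨C, Finset.mem_filter.mpr ⟨hC, hsC⟩⟩
  have hallF : ∀ C ∈ B, IsZClause Vs C := by
    intro C hC
    have hC' := Finset.mem_filter.mp hC
    exact hall C (Finset.mem_union_left _ hC'.1) hC'.2
  -- minimal finset Vs' ⊆ Vs hitting all clauses of B
  set P : Finset α → Prop :=
    fun t => (↑t : Set α) ⊆ Vs ∧ ∀ C ∈ B, IsZClause (↑t : Set α) C with hP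
  have hPex : ∃ t, P t := by
    refine ⟨B.biUnion (fun C => (C.image Prod.fst).filter (· ∈ Vs)), ?_, ?_⟩
    · intro v hv
      simp only [Finset.coe_biUnion, Set.mem_iUnion, Finset.mem_coe,
        Finset.mem_filter] at hv
      obtain ⟨C, _, _, hvVs⟩ := hv
      exact hvVs
    · intro C hC
      obtain ⟨v, hvC, hvVs⟩ := hallF C hC
      refine ⟨v, hvC, ?_⟩
      obtain ⟨b, hb⟩ := hvC
      simp only [Finset.coe_biUnion, Set.mem_iUnion, Finset.mem_coe]
      exact ⟨C, hC, Finset.mem_filter.mpr ⟨Finset.mem_image.mpr ⟨(v, b), hb, rfl⟩, hvVs⟩⟩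
  obtain ⟨s, ⟨hsVs, hsB⟩, hsmin⟩ := exists_min_card hPex
  have hsne : (↑s : Set α).Nonempty := by
    obtain ⟨C, hC⟩ := hBne
    obtain ⟨v, _, hv⟩ := hsB C hC
    exact ⟨v, hv⟩
  -- p is a Vs'-boundary point of FH
  have hbpF : BoundaryPt FH (↑s) p := by
    refine ⟨hsne, hfalsF, ?_, ?_⟩
    · intro C hC hsC
      exact hsB C (Finset.mem_filter.mpr ⟨hC, hsC⟩)
    · intro Z' hZ' hcontra
      rcases Set.eq_empty_or_nonempty Z' with rfl | hZne
      · obtain ⟨C, hC⟩ := hBne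
        have hC' := Finset.mem_filter.mp hC
        obtain ⟨v, _, hv⟩ := hcontra C hC'.1 hC'.2
        exact hv
      · set s' : Finset α := s.filter (· ∈ Z') with hs'
        have hPs' : P s' := by
          constructor
          · intro v hv
            have := Finset.mem_filter.mp hv
            exact hsVs this.1
          · intro C hC
            have hC' := Finset.mem_filter.mp hC
            obtain ⟨v, hvC, hvZ'⟩ := hcontra C hC'.1 hC'.2
            have hvs : v ∈ s := hZ'.1 hvZ'
            exact ⟨v, hvC, Finset.mem_filter.mpr ⟨hvs, hvZ'⟩⟩
        have hssub : s' ⊂ s := by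
          obtain ⟨v, hvs, hvZ'⟩ := Set.exists_of_ssubset hZ'
          refine ⟨Finset.filter_subset _ _, fun h => ?_⟩
          have := Finset.mem_filter.mp (h hvs)
          exact hvZ' this.2
        exact absurd (hsmin s' hPs') (not_le.mpr (Finset.card_lt_card hssub))
  -- p is W-removable in FH
  have hremF : Removable FH W p := by
    obtain ⟨D, himp, hDfals, hDW⟩ := hrem
    exact ⟨D, fun p₀ h₀ => himp p₀ (hkey p₀ h₀), hDfals, hDW⟩
  exact hds (↑s) (hsVs.trans hVZ) hsne p hbpF hremF

end QE
end

section
/- Let the D-sequent (∃X[F], q, W) → Z hold, and let W′ be a superset of W with W′ ⊆ X \ Vars(q) (in particular W′ ∩ Vars(q) = ∅). Then the D-sequent (∃X[F], q, W′) → Z holds as well. -/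
open scoped Classical

namespace QE

variable {α : Type*}

/-- Proposition 8: If the D-sequent `(∃X[F], q, W) → Z` holds and
`W ⊆ W' ⊆ X \ Vars(q)`, then the D-sequent `(∃X[F], q, W') → Z` holds as well. -/
theorem dseq_increase_scope {α : Type*} (F : CNF α) (X Z W W' : Set α) (q : Assign α)
    (hX : X ⊆ cnfVars F) (hq : avars q ⊆ cnfVars F)
    (hZW : Z ⊆ W) (hWq : W ⊆ X \ avars q)
    (hWW' : W ⊆ W') (hW'q : W' ⊆ X \ avars q)
    (hds : DSeq F X q W Z) :
    DSeq F X q W' Z := by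
  intro Vs hVs hne p hbp hrem
  obtain ⟨C, h1, h2, h3⟩ := hrem
  exact hds Vs hVs hne p hbp ⟨C, h1, h2, Set.eq_empty_of_subset_empty
    (fun x hx => h3 ▸ ⟨hx.1, hWW' hx.2⟩)⟩

end QE
end

section
/- Let s and q be assignments to variables of F with s ⊆ q. Suppose the D-sequents (∃X[F], s, W) → Z and (∃X[F \ F^Z], q, {v}) → {v} hold, where Vars(q) ∩ Z = Vars(q) ∩ W = ∅. Then the D-sequent (∃X[F], q, W ∪ {v}) → Z ∪ {v} holds. -/
open scoped Classical

namespace QE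

variable {α : Type*}

/-! ### Auxiliary lemmas for `dseq_compose` -/

lemma not_satClause_iff (p : α → Bool) (C : Clause α) :
    ¬ pointSatClause p C ↔ ∀ l ∈ C, p l.1 = !l.2 := by
  unfold pointSatClause
  push_neg
  refine forall₂_congr fun l _ => ?_
  cases h : p l.1 <;> cases h2 : l.2 <;> simp

lemma not_sat_subset {p : α → Bool} {C D : Clause α} (h : D ⊆ C)
    (hC : ¬ pointSatClause p C) : ¬ pointSatClause p D := by
  intro ⟨l, hl, hsat⟩; exact hC ⟨l, h hl, hsat⟩

lemma mem_cofactor {q : Assign α} {F : CNF α} {D : Clause α} :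
    D ∈ cofactor q F ↔ ∃ C ∈ F, ¬ asatClause q C ∧ cofClause q C = D := by
  simp only [cofactor, Finset.mem_image, Finset.mem_filter]
  tauto

lemma mem_cofClause {q : Assign α} {C : Clause α} {l : Lit α} :
    l ∈ cofClause q C ↔ l ∈ C ∧ ¬ afalsLit q l := by
  simp [cofClause]

lemma clauseVars_mono {C D : Clause α} (h : C ⊆ D) : clauseVars C ⊆ clauseVars D := by
  rintro w ⟨b, hb⟩; exact ⟨b, h hb⟩

lemma cofClause_subset (q : Assign α) (C : Clause α) : cofClause q C ⊆ C :=
  Finset.filter_subset _ _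

lemma mem_clauseVars_of_mem {C : Clause α} {l : Lit α} (hl : l ∈ C) :
    l.1 ∈ clauseVars C := ⟨l.2, by simpa using hl⟩

lemma cof_no_qvars {q : Assign α} {F : CNF α} {D : Clause α}
    (hD : D ∈ cofactor q F) : clauseVars D ∩ avars q = ∅ := by
  obtain ⟨C, _hC, hsat, hcof⟩ := mem_cofactor.mp hD
  ext w
  simp only [Set.mem_inter_iff, Set.mem_empty_iff_false, iff_false, not_and]
  rintro ⟨b, hb⟩ hw
  subst hcof
  obtain ⟨hbC, hnf⟩ := mem_cofClause.mp hb
  rcases hqw : q w with _ | c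
  · exact hw hqw
  · rcases Bool.eq_or_eq_not c b with h | h
    · exact hsat ⟨(w, b), hbC, by rw [hqw, h]⟩
    · exact hnf (by simp [afalsLit, hqw, h])


/-- If `p` falsifies `F` and every falsified clause is a `Z`-clause, then `p` is a
`Vs`-boundary point for some nonempty `Vs ⊆ Z`. -/
lemma exists_boundary (F : CNF α) (Z : Set α) (p : α → Bool)
    (hfals : ¬ pointSatCNF p F)
    (hZ : ∀ C ∈ F, ¬ pointSatClause p C → IsZClause Z C) :
    ∃ Vs : Set α, Vs ⊆ Z ∧ Vs.Nonempty ∧ BoundaryPt F Vs p := by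
  classical
  set T0 : Finset α := (F.biUnion fun C => C.image Prod.fst).filter (· ∈ Z) with hT0
  set A : Finset (Finset α) := T0.powerset.filter
    (fun V => ∀ C ∈ F, ¬ pointSatClause p C → IsZClause (↑V) C) with hA
  have hT0A : T0 ∈ A := by
    refine Finset.mem_filter.mpr ⟨Finset.mem_powerset.mpr le_rfl, ?_⟩
    intro C hC hnC
    obtain ⟨w, hwC, hwZ⟩ := hZ C hC hnC
    obtain ⟨b, hb⟩ := hwC
    refine ⟨w, ⟨b, hb⟩, ?_⟩
    simp only [hT0, Finset.coe_filter, Set.mem_setOf_eq, Finset.mem_biUnion]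
    exact ⟨⟨C, hC, Finset.mem_image.mpr ⟨(w, b), hb, rfl⟩⟩, hwZ⟩
  obtain ⟨V, hVA, hmin⟩ := Finset.exists_min_image A Finset.card ⟨T0, hT0A⟩
  have hVA' := Finset.mem_filter.mp hVA
  have hVT0 : V ⊆ T0 := Finset.mem_powerset.mp hVA'.1
  have hVZ : (↑V : Set α) ⊆ Z := by
    intro w hw
    exact (Finset.mem_filter.mp (hVT0 hw)).2
  have hex : ∃ C ∈ F, ¬ pointSatClause p C := by
    by_contra h
    push_neg at h
    exact hfals h
  obtain ⟨C₀, hC₀, hnC₀⟩ := hex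
  have hVne : (↑V : Set α).Nonempty := by
    obtain ⟨w, _, hwV⟩ := hVA'.2 C₀ hC₀ hnC₀
    exact ⟨w, hwV⟩
  refine ⟨↑V, hVZ, hVne, hVne, hfals, hVA'.2, ?_⟩
  intro Z' hZ' hall
  have hZ'fin : Z'.Finite := ((V.finite_toSet).subset hZ'.1)
  have hcoe : (↑hZ'fin.toFinset : Set α) = Z' := hZ'fin.coe_toFinset
  have hmemA : hZ'fin.toFinset ∈ A := by
    refine Finset.mem_filter.mpr ⟨Finset.mem_powerset.mpr ?_, by rw [hcoe]; exact hall⟩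
    intro w hw
    have hw' : w ∈ Z' := by rwa [← hcoe]
    exact hVT0 (hZ'.1 hw')
  have hss : hZ'fin.toFinset ⊂ V := by
    rw [← Finset.coe_ssubset, hcoe]
    exact hZ'
  exact absurd (hmin _ hmemA) (by simpa using Finset.card_lt_card hss)

/-- If `Z` is redundant in `F` with scope `W` and `F ⊨ C` with `V(C) ∩ W = ∅`,
then `F \ F^Z ⊨ C`. -/
lemma implies_of_redundant (F : CNF α) (Z W : Set α) (C : Clause α)
    (hred : RedundantWithScope F Z W)
    (himp : Implies F C) (hCW : clauseVars C ∩ W = ∅) :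
    Implies (F \ zClauses F Z) C := by
  intro p hp
  by_contra hpC
  have hfals : ¬ pointSatCNF p F := fun h => hpC (himp p h)
  have hZ : ∀ C' ∈ F, ¬ pointSatClause p C' → IsZClause Z C' := by
    intro C' hC' hnC'
    by_contra hnz
    exact hnC' (hp C' (Finset.mem_sdiff.mpr
      ⟨hC', fun h => hnz ((Finset.mem_filter.mp h).2)⟩))
  obtain ⟨Vs, hVsZ, hne, hbd⟩ := exists_boundary F Z p hfals hZ
  exact hred Vs hVsZ hne p hbd ⟨C, himp, hpC, hCW⟩

/-- Stripping `q`-variable literals from an implied clause falsified by some point. -/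
lemma implies_strip (F : CNF α) (q : Assign α) (C : Clause α) (p : α → Bool)
    (hdisj : ∀ D ∈ F, clauseVars D ∩ avars q = ∅)
    (himp : Implies F C) (hpC : ¬ pointSatClause p C) :
    Implies F (C.filter fun l => q l.1 = none) := by
  classical
  intro p₁ hp₁
  have hpC' := (not_satClause_iff p C).mp hpC
  have hnt : ∀ l ∈ C, (l.1, !l.2) ∉ C := by
    intro l hl hl'
    have h1 := hpC' l hl
    have h2 := hpC' _ hl'
    simp only at h2
    rw [h1] at h2
    cases l.2 <;> simp at h2
  set p' : α → Bool := fun w => if (w, p₁ w) ∈ C ∧ q w ≠ none then !(p₁ w) else p₁ w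
    with hp'def
  have hagree : ∀ w, q w = none → p' w = p₁ w := by
    intro w hw; simp [hp'def, hw]
  have hfalsq : ∀ l ∈ C, q l.1 ≠ none → p' l.1 = !l.2 := by
    intro l hl hql
    by_cases h : p₁ l.1 = l.2
    · have hmem : (l.1, p₁ l.1) ∈ C := by rw [h]; simpa using hl
      simp only [hp'def]
      rw [if_pos ⟨hmem, hql⟩, h]
    · have h' : p₁ l.1 = !l.2 := by cases hb : p₁ l.1 <;> cases hc : l.2 <;> simp_all
      have hmem : (l.1, p₁ l.1) ∉ C := by rw [h']; exact hnt l hl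
      simp only [hp'def]
      rw [if_neg (fun hc => hmem hc.1), h']
  have hp'F : pointSatCNF p' F := by
    intro D hD
    obtain ⟨l, hlD, hl⟩ := hp₁ D hD
    refine ⟨l, hlD, ?_⟩
    have hql : q l.1 = none := by
      by_contra h
      have : l.1 ∈ clauseVars D ∩ avars q := ⟨mem_clauseVars_of_mem hlD, h⟩
      rw [hdisj D hD] at this
      exact this
    rw [hagree _ hql]; exact hl
  obtain ⟨l, hlC, hl⟩ := himp p' hp'F
  by_cases hql : q l.1 = none
  · exact ⟨l, Finset.mem_filter.mpr ⟨hlC, hql⟩, by rw [← hagree _ hql]; exact hl⟩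
  · rw [hfalsq l hlC hql] at hl
    cases l.2 <;> simp at hl


lemma mem_cof_diff (F : CNF α) (Z : Set α) (q : Assign α) (hqZ : avars q ∩ Z = ∅)
    {D : Clause α} (hD : D ∈ cofactor q F) (hnz : ¬ IsZClause Z D) :
    D ∈ cofactor q (F \ zClauses F Z) := by
  obtain ⟨C, hC, hsat, hcof⟩ := mem_cofactor.mp hD
  have hZC : ¬ IsZClause Z C := by
    rintro ⟨w, ⟨b, hb⟩, hwZ⟩
    have hqw : q w = none := by
      by_contra h
      have : w ∈ avars q ∩ Z := ⟨h, hwZ⟩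
      rw [hqZ] at this; exact this
    have hbD : (w, b) ∈ D := by
      rw [← hcof]
      exact mem_cofClause.mpr ⟨hb, by simp [afalsLit, hqw]⟩
    exact hnz ⟨w, ⟨b, hbD⟩, hwZ⟩
  exact mem_cofactor.mpr ⟨C, Finset.mem_sdiff.mpr
    ⟨hC, fun h => hZC ((Finset.mem_filter.mp h).2)⟩, hsat, hcof⟩

/-- Lifting a redundancy statement from `F|s` to `F|q` for `s ⊆ q` with
`Vars(q)` disjoint from `Z` and `W`. -/
lemma redundant_lift (F : CNF α) (Z W : Set α) (s q : Assign α)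
    (hsq : AExtends s q) (hqZ : avars q ∩ Z = ∅) (hqW : avars q ∩ W = ∅)
    (hqfin : (avars q).Finite)
    (hred : RedundantWithScope (cofactor s F) Z W) :
    RedundantWithScope (cofactor q F) Z W := by
  classical
  intro Vs hVsZ hne p hbd hrem
  obtain ⟨C0, himp, hpC0, hC0W⟩ := hrem
  -- strip the q-variables from C0
  set C0' : Clause α := C0.filter (fun l => q l.1 = none) with hC0'def
  have himp' : Implies (cofactor q F) C0' :=
    implies_strip _ q C0 p (fun D hD => cof_no_qvars hD) himp hpC0
  have hpC0' : ¬ pointSatClause p C0' := not_sat_subset (Finset.filter_subset _ _) hpC0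
  -- the point p' := p overridden by q
  set p' : α → Bool := fun w => (q w).getD (p w) with hp'def
  have hp'q : ∀ w b, q w = some b → p' w = b := by intro w b h; simp [hp'def, h]
  have hp'p : ∀ w, q w = none → p' w = p w := by intro w h; simp [hp'def, h]
  -- the clause consisting of the negations of q's assignments
  set negq : Clause α := hqfin.toFinset.image (fun w => (w, !((q w).getD false)))
    with hnegqdef
  have hmem_negq : ∀ w b, q w = some b → (w, !b) ∈ negq := by
    intro w b h
    refine Finset.mem_image.mpr ⟨w, ?_, by simp [h]⟩
    simp [avars, h]
  have hnegq_mem : ∀ l ∈ negq, q l.1 = some (!l.2) := by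
    intro l hl
    obtain ⟨w, hw, rfl⟩ := Finset.mem_image.mp hl
    simp only [Set.Finite.mem_toFinset, avars, Set.mem_setOf_eq] at hw
    rcases h : q w with _ | b
    · exact absurd h hw
    · simp [h]
  set C1 : Clause α := C0' ∪ negq with hC1def
  -- a clause of F not satisfied by q is not satisfied by s
  have hsat_sq : ∀ C : Clause α, ¬ asatClause q C → ¬ asatClause s C := by
    rintro C h ⟨l, hl, hsl⟩
    exact h ⟨l, hl, hsq _ _ hsl⟩
  -- key transfer: if C ∈ F is not q-satisfied and p falsifies cofClause q C,
  -- then p' falsifies cofClause s C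
  have htrans : ∀ C : Clause α, ¬ asatClause q C →
      ¬ pointSatClause p (cofClause q C) → ¬ pointSatClause p' (cofClause s C) := by
    intro C hqsat hpf
    rw [not_satClause_iff] at hpf ⊢
    intro l hl
    obtain ⟨hlC, hlns⟩ := mem_cofClause.mp hl
    rcases hql : q l.1 with _ | b
    · have : l ∈ cofClause q C := mem_cofClause.mpr ⟨hlC, by simp [afalsLit, hql]⟩
      rw [hp'p _ hql]
      exact hpf l this
    · rcases Bool.eq_or_eq_not b l.2 with h | h
      · exact absurd ⟨l, hlC, by rw [hql, h]⟩ hqsat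
      · rw [hp'q _ b hql, h]
  -- p' falsifies C iff it falsifies cofClause s C, for non-s-satisfied clauses
  have hbd2 := hbd.2.1
  -- construct the boundary point property for p' on cofactor s F
  have hbd' : BoundaryPt (cofactor s F) Vs p' := by
    refine ⟨hne, ?_, ?_, ?_⟩
    · -- p' falsifies cofactor s F
      have hex : ∃ D ∈ cofactor q F, ¬ pointSatClause p D := by
        by_contra h
        push_neg at h
        exact hbd2 h
      obtain ⟨D, hD, hfalsD⟩ := hex
      obtain ⟨C, hC, hqsat, hcof⟩ := mem_cofactor.mp hD
      intro hsatall
      refine htrans C hqsat (by rw [hcof]; exact hfalsD) ?_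
      exact hsatall _ (mem_cofactor.mpr ⟨C, hC, hsat_sq C hqsat, rfl⟩)
    · -- every clause of cofactor s F falsified by p' is a Vs-clause
      intro D hD hfalsD
      obtain ⟨C, hC, hssat, hcof⟩ := mem_cofactor.mp hD
      -- p' falsifies C itself
      have hfalsC : ∀ l ∈ C, p' l.1 = !l.2 := by
        intro l hl
        by_cases hf : afalsLit s l
        · have : q l.1 = some (!l.2) := hsq _ _ hf
          rw [hp'q _ _ this]
        · have : l ∈ D := by rw [← hcof]; exact mem_cofClause.mpr ⟨hl, hf⟩
          exact (not_satClause_iff p' D).mp hfalsD l this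
      have hqsat : ¬ asatClause q C := by
        rintro ⟨l, hl, hql⟩
        have := hfalsC l hl
        rw [hp'q _ _ hql] at this
        cases l.2 <;> simp at this
      have hfalsqC : ¬ pointSatClause p (cofClause q C) := by
        rw [not_satClause_iff]
        intro l hl
        obtain ⟨hlC, hlnf⟩ := mem_cofClause.mp hl
        have hql : q l.1 = none := by
          rcases h : q l.1 with _ | b
          · rfl
          · rcases Bool.eq_or_eq_not b l.2 with h' | h'
            · exact absurd ⟨l, hlC, by rw [h, h']⟩ hqsat
            · exact absurd (show afalsLit q l by simp [afalsLit, h, h']) hlnf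
        rw [← hp'p _ hql]
        exact hfalsC l hlC
      have hmemq : cofClause q C ∈ cofactor q F := mem_cofactor.mpr ⟨C, hC, hqsat, rfl⟩
      obtain ⟨w, hwvars, hwVs⟩ := hbd.2.2.1 _ hmemq hfalsqC
      obtain ⟨b, hb⟩ := hwvars
      obtain ⟨hbC, hbnf⟩ := mem_cofClause.mp hb
      have hbD : (w, b) ∈ D := by
        rw [← hcof]
        exact mem_cofClause.mpr ⟨hbC, fun hf => hbnf (hsq _ _ hf)⟩
      exact ⟨w, ⟨b, hbD⟩, hwVs⟩
    · -- minimality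
      intro Z' hZ' hall
      refine hbd.2.2.2 Z' hZ' ?_
      intro D hD hfalsD
      obtain ⟨C, hC, hqsat, hcof⟩ := mem_cofactor.mp hD
      have hfals' : ¬ pointSatClause p' (cofClause s C) :=
        htrans C hqsat (by rw [hcof]; exact hfalsD)
      have hmems : cofClause s C ∈ cofactor s F :=
        mem_cofactor.mpr ⟨C, hC, hsat_sq C hqsat, rfl⟩
      obtain ⟨w, hwvars, hwZ'⟩ := hall _ hmems hfals'
      obtain ⟨b, hb⟩ := hwvars
      obtain ⟨hbC, hbns⟩ := mem_cofClause.mp hb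
      have hql : q w = none := by
        rcases h : q w with _ | c
        · rfl
        · exfalso
          have : w ∈ avars q ∩ Z := ⟨by simp [avars, h], hVsZ (hZ'.1 hwZ')⟩
          rw [hqZ] at this; exact this
      have hbD : (w, b) ∈ D := by
        rw [← hcof]
        exact mem_cofClause.mpr ⟨hbC, by simp [afalsLit, hql]⟩
      exact ⟨w, ⟨b, hbD⟩, hwZ'⟩
  -- p' is W-removable in cofactor s F via C1
  have hrem' : Removable (cofactor s F) W p' := by
    refine ⟨C1, ?_, ?_, ?_⟩
    · -- cofactor s F implies C1
      intro p₁ hp₁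
      by_cases hext : ∀ w b, q w = some b → p₁ w = b
      · have hp₁q : pointSatCNF p₁ (cofactor q F) := by
          intro D hD
          obtain ⟨C, hC, hqsat, hcof⟩ := mem_cofactor.mp hD
          obtain ⟨l, hl, hsatl⟩ := hp₁ _ (mem_cofactor.mpr ⟨C, hC, hsat_sq C hqsat, rfl⟩)
          obtain ⟨hlC, hlns⟩ := mem_cofClause.mp hl
          have hlnq : ¬ afalsLit q l := by
            intro hf
            have := hext _ _ hf
            rw [hsatl] at this
            cases l.2 <;> simp at this
          exact ⟨l, by rw [← hcof]; exact mem_cofClause.mpr ⟨hlC, hlnq⟩, hsatl⟩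
        obtain ⟨l, hl, hsatl⟩ := himp' p₁ hp₁q
        exact ⟨l, Finset.mem_union_left _ hl, hsatl⟩
      · push_neg at hext
        obtain ⟨w, b, hwb, hne'⟩ := hext
        have : p₁ w = !b := by cases h : p₁ w <;> cases b <;> simp_all
        exact ⟨(w, !b), Finset.mem_union_right _ (hmem_negq w b hwb), this⟩
    · -- p' falsifies C1
      rw [not_satClause_iff]
      intro l hl
      rcases Finset.mem_union.mp hl with h | h
      · have hql : q l.1 = none := (Finset.mem_filter.mp h).2
        rw [hp'p _ hql]
        exact (not_satClause_iff p C0').mp hpC0' l h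
      · have := hnegq_mem l h
        rw [hp'q _ _ this]
    · -- vars of C1 avoid W
      ext w
      simp only [Set.mem_inter_iff, Set.mem_empty_iff_false, iff_false, not_and]
      rintro ⟨b, hb⟩ hwW
      rcases Finset.mem_union.mp hb with h | h
      · have : w ∈ clauseVars C0 ∩ W :=
          ⟨⟨b, (Finset.mem_filter.mp h).1⟩, hwW⟩
        rw [hC0W] at this; exact this
      · have : w ∈ avars q ∩ W := ⟨by simp [avars, hnegq_mem _ h], hwW⟩
        rw [hqW] at this; exact this
  exact hred Vs hVsZ hne p' hbd' hrem'

/-- Proposition 10: Let `s ⊆ q`, let the D-sequents `(∃X[F], s, W) → Z` and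
`(∃X[F \ F^Z], q, {v}) → {v}` hold, where `Vars(q) ∩ Z = Vars(q) ∩ W = ∅`. Then the
D-sequent `(∃X[F], q, W ∪ {v}) → Z ∪ {v}` holds. -/
theorem dseq_compose {α : Type*} (F : CNF α) (X Z W : Set α) (s q : Assign α) (v : α)
    (hX : X ⊆ cnfVars F) (hs : avars s ⊆ cnfVars F) (hq : avars q ⊆ cnfVars F)
    (hsq : AExtends s q)
    (hZW : Z ⊆ W) (hWs : W ⊆ X \ avars s)
    (hqZ : avars q ∩ Z = ∅) (hqW : avars q ∩ W = ∅)
    (hv : v ∈ X \ avars q)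
    (hds1 : DSeq F X s W Z)
    (hds2 : DSeq (F \ zClauses F Z) X q {v} {v}) :
    DSeq F X q (W ∪ {v}) (Z ∪ {v}) := by
  classical
  have hqfin : (avars q).Finite := (cnfVars_finite F).subset hq
  intro Vs hVs hne p hbd hrem
  obtain ⟨C0, himp, hpC0, hC0W⟩ := hrem
  have hC0W' : clauseVars C0 ∩ W = ∅ := by
    have h := Set.inter_subset_inter_right (clauseVars C0) (Set.subset_union_left (s := W) (t := {v}))
    rw [hC0W] at h
    exact Set.subset_empty_iff.mp h
  have hC0v : clauseVars C0 ∩ {v} = ∅ := by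
    have h := Set.inter_subset_inter_right (clauseVars C0) (Set.subset_union_right (s := W) (t := {v}))
    rw [hC0W] at h
    exact Set.subset_empty_iff.mp h
  have hredq : RedundantWithScope (cofactor q F) Z W :=
    redundant_lift F Z W s q hsq hqZ hqW hqfin hds1
  by_cases hall : ∀ D ∈ cofactor q F, ¬ pointSatClause p D → IsZClause Z D
  · obtain ⟨Vs', hVs'Z, hne', hbd'⟩ := exists_boundary _ Z p hbd.2.1 hall
    exact hredq Vs' hVs'Z hne' p hbd' ⟨C0, himp, hpC0, hC0W'⟩
  · push_neg at hall
    obtain ⟨D0, hD0, hfals0, hnz0⟩ := hall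
    have hD0H : D0 ∈ cofactor q (F \ zClauses F Z) := mem_cof_diff F Z q hqZ hD0 hnz0
    have himpH : Implies (cofactor q (F \ zClauses F Z)) C0 := by
      have h1 : Implies (cofactor q F \ zClauses (cofactor q F) Z) C0 :=
        implies_of_redundant _ Z W C0 hredq himp hC0W'
      intro p₁ hp₁
      refine h1 p₁ ?_
      intro D hD
      obtain ⟨hDq, hDnz⟩ := Finset.mem_sdiff.mp hD
      have hnz : ¬ IsZClause Z D := fun h => hDnz (Finset.mem_filter.mpr ⟨hDq, h⟩)
      exact hp₁ D (mem_cof_diff F Z q hqZ hDq hnz)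
    have hbdH : BoundaryPt (cofactor q (F \ zClauses F Z)) {v} p := by
      refine ⟨⟨v, rfl⟩, fun h => hfals0 (h D0 hD0H), ?_, ?_⟩
      · intro D hD hnD
        obtain ⟨C, hC, hsat, hcof⟩ := mem_cofactor.mp hD
        obtain ⟨hCF, hCnz⟩ := Finset.mem_sdiff.mp hC
        have hDq : D ∈ cofactor q F := mem_cofactor.mpr ⟨C, hCF, hsat, hcof⟩
        have hZC : ¬ IsZClause Z C := fun h => hCnz (Finset.mem_filter.mpr ⟨hCF, h⟩)
        obtain ⟨w, hwD, hwVs⟩ := hbd.2.2.1 D hDq hnD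
        have hwv : w = v := by
          rcases hVs hwVs with hw | hw
          · exact absurd ⟨w, clauseVars_mono (hcof ▸ cofClause_subset q C) hwD, hw⟩ hZC
          · exact hw
        exact ⟨w, hwD, by simp [hwv]⟩
      · intro Z' hZ' habs
        have hZ'e : Z' = ∅ := by
          rcases Set.eq_empty_or_nonempty Z' with h | h
          · exact h
          · exact absurd (Set.Nonempty.subset_singleton_iff h |>.mp hZ'.1 ▸ hZ'.2)
              (by simp)
        subst hZ'e
        obtain ⟨w, _, hw⟩ := habs D0 hD0H hfals0
        exact hw
    exact hds2 {v} le_rfl ⟨v, rfl⟩ p hbdH ⟨C0, himpH, hpC0, hC0v⟩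

end QE
end

section
/- Let ∃X[F] be an ∃CNF formula, let C be a clause of F falsified by an assignment q, and let v be a variable of X \ Vars(q). Let s be the shortest assignment falsifying C, i.e., the restriction of q to V(C). Then the D-sequent (∃X[F], s, {v}) → {v} holds. -/
open scoped Classical

namespace QE

variable {α : Type*}

/-! If `q` falsifies a clause `C` of `F`, so does its restriction `s` to `V(C)`; hence `F|s`
contains the empty clause. The empty clause is falsified by every point but is a `Z`-clause
for no `Z`, so `F|s` has no boundary points at all and every D-sequent with assignment `s` holds
vacuously. -/

theorem not_asatClause_of_forall_afalsLit {q : Assign α} {C : Clause α}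
    (h : ∀ l ∈ C, afalsLit q l) : ¬ asatClause q C := by
  rintro ⟨l, hl, hsat⟩
  simpa [afalsLit, hsat] using h l hl

theorem cofClause_eq_empty_of_forall_afalsLit {q : Assign α} {C : Clause α}
    (h : ∀ l ∈ C, afalsLit q l) : cofClause q C = ∅ :=
  Finset.filter_false_of_mem fun l hl => not_not_intro (h l hl)

theorem empty_mem_cofactor_of_forall_afalsLit {q : Assign α} {F : CNF α} {C : Clause α}
    (hC : C ∈ F) (h : ∀ l ∈ C, afalsLit q l) : ∅ ∈ cofactor q F :=
  Finset.mem_image.mpr ⟨C, Finset.mem_filter.mpr ⟨hC, not_asatClause_of_forall_afalsLit h⟩,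
    cofClause_eq_empty_of_forall_afalsLit h⟩

theorem forall_afalsLit_restrict {q : Assign α} {C : Clause α} (h : ∀ l ∈ C, afalsLit q l) :
    ∀ l ∈ C, afalsLit (fun w => if w ∈ clauseVars C then q w else none) l := by
  intro l hl
  have hvar : l.1 ∈ clauseVars C := ⟨l.2, hl⟩
  simpa [afalsLit, hvar] using h l hl

theorem not_isZClause_empty (Z : Set α) : ¬ IsZClause Z ∅ := by
  rintro ⟨w, ⟨b, hb⟩, -⟩
  exact Finset.notMem_empty _ hb

theorem not_boundaryPt_of_empty_mem {F : CNF α} (hF : ∅ ∈ F) (Z : Set α) (p : α → Bool) :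
    ¬ BoundaryPt F Z p := fun ⟨_, _, hZ, _⟩ =>
  not_isZClause_empty Z (hZ ∅ hF fun ⟨l, hl, _⟩ => Finset.notMem_empty l hl)

theorem redundantWithScope_of_empty_mem {F : CNF α} (hF : ∅ ∈ F) (Z W : Set α) :
    RedundantWithScope F Z W :=
  fun Vs _ _ p hp _ => not_boundaryPt_of_empty_mem hF Vs p hp

theorem dseq_falsified_clause_general {α : Type*} (F : CNF α) (X : Set α) (q : Assign α)
    (C : Clause α) (v : α)
    (hC : C ∈ F) (hfals : ∀ l ∈ C, afalsLit q l) :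
    DSeq F X (fun w => if w ∈ clauseVars C then q w else none) {v} {v} :=
  redundantWithScope_of_empty_mem
    (empty_mem_cofactor_of_forall_afalsLit hC (forall_afalsLit_restrict hfals)) {v} {v}

/-- Lemma 5: Let `C` be a clause of `F` falsified by an assignment `q` and
let `v ∈ X \ Vars(q)`. Let `s` be the shortest assignment falsifying `C`, i.e. the
restriction of `q` to `V(C)`. Then the D-sequent `(∃X[F], s, {v}) → {v}` holds. -/
theorem dseq_falsified_clause {α : Type*} (F : CNF α) (X : Set α) (q : Assign α)
    (C : Clause α) (v : α)
    (hX : X ⊆ cnfVars F) (hq : avars q ⊆ cnfVars F)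
    (hC : C ∈ F) (hfals : ∀ l ∈ C, afalsLit q l)
    (hv : v ∈ X \ avars q) :
    DSeq F X (fun w => if w ∈ clauseVars C then q w else none) {v} {v} :=
  dseq_falsified_clause_general F X q C v hC hfals

end QE
end
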